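/- Debiased moment identity for regression functionals: Let g₀(x) = E[Y | X = x], let m(Z; g) be linear in g with θ₀ := E[m(Z; g₀)], and let a₀ satisfy E[m(Z; g)] = E[a₀(X)g(X)] for all g in a class containing ĝ - g₀. Then for any fixed functions a, g, E[m(Z; g) + a(X)(Y - g(X))] - θ₀ = E[(a₀(X) - a(X))(g(X) - g₀(X))]. -/

import Mathlib

open MeasureTheory

section Residuals

variable {Ω : Type*} [MeasurableSpace Ω] {μ : Measure Ω} {A Y G G₀ : Ω → ℝ}

theorem integrable_mul_sub_of_integrable_mul_residuals
    (h₀ : Integrable (fun ω => A ω * (Y ω - G₀ ω)) μ)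
    (h : Integrable (fun ω => A ω * (Y ω - G ω)) μ) :
    Integrable (fun ω => A ω * (G ω - G₀ ω)) μ :=
  (h₀.sub h).congr (ae_of_all _ fun ω => by simp only [Pi.sub_apply]; ring)

theorem integral_mul_residual_eq_neg_integral_mul_sub
    (horth : ∫ ω, A ω * (Y ω - G₀ ω) ∂μ = 0)
    (h₀ : Integrable (fun ω => A ω * (Y ω - G₀ ω)) μ)
    (h : Integrable (fun ω => A ω * (Y ω - G ω)) μ) :
    ∫ ω, A ω * (Y ω - G ω) ∂μ = -∫ ω, A ω * (G ω - G₀ ω) ∂μ := by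
  have hsplit : (fun ω => A ω * (Y ω - G ω))
      = fun ω => A ω * (Y ω - G₀ ω) - A ω * (G ω - G₀ ω) := by
    funext ω; ring
  rw [hsplit, integral_sub h₀ (integrable_mul_sub_of_integrable_mul_residuals h₀ h), horth,
    zero_sub]

end Residuals

theorem stmt_15_general {Ω 𝒳 : Type*} [MeasurableSpace Ω] (μ : Measure Ω)
    (X : Ω → 𝒳) (Y : Ω → ℝ) (g₀ g a a₀ : 𝒳 → ℝ)
    (Mfun : (𝒳 → ℝ) → Ω → ℝ)
    -- g₀ is the conditional mean of Y given X:
    (hg₀ : ∀ h : 𝒳 → ℝ, Integrable (fun ω => h (X ω) * (Y ω - g₀ (X ω))) μ →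
        ∫ ω, h (X ω) * (Y ω - g₀ (X ω)) ∂μ = 0)
    -- linearity of m in g (in expectation):
    (hlin : ∫ ω, Mfun g ω ∂μ - ∫ ω, Mfun g₀ ω ∂μ
        = ∫ ω, Mfun (fun x => g x - g₀ x) ω ∂μ)
    -- Riesz representation of the functional at g - g₀:
    (hriesz : ∫ ω, Mfun (fun x => g x - g₀ x) ω ∂μ
        = ∫ ω, a₀ (X ω) * (g (X ω) - g₀ (X ω)) ∂μ)
    (hIntm : Integrable (Mfun g) μ)
    (hIntc : Integrable (fun ω => a (X ω) * (Y ω - g (X ω))) μ)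
    (hIntc₀ : Integrable (fun ω => a (X ω) * (Y ω - g₀ (X ω))) μ)
    (hInta₀g : Integrable (fun ω => a₀ (X ω) * (g (X ω) - g₀ (X ω))) μ) :
    (∫ ω, (Mfun g ω + a (X ω) * (Y ω - g (X ω))) ∂μ) - ∫ ω, Mfun g₀ ω ∂μ
      = ∫ ω, (a₀ (X ω) - a (X ω)) * (g (X ω) - g₀ (X ω)) ∂μ := by
  have hres := integral_mul_residual_eq_neg_integral_mul_sub (hg₀ a hIntc₀) hIntc₀ hIntc
  have hInta := integrable_mul_sub_of_integrable_mul_residuals hIntc₀ hIntc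
  calc (∫ ω, (Mfun g ω + a (X ω) * (Y ω - g (X ω))) ∂μ) - ∫ ω, Mfun g₀ ω ∂μ
      = (∫ ω, Mfun g ω ∂μ - ∫ ω, Mfun g₀ ω ∂μ) + ∫ ω, a (X ω) * (Y ω - g (X ω)) ∂μ := by
        rw [integral_add hIntm hIntc]; ring
    _ = ∫ ω, a₀ (X ω) * (g (X ω) - g₀ (X ω)) ∂μ - ∫ ω, a (X ω) * (g (X ω) - g₀ (X ω)) ∂μ := by
        rw [hlin, hriesz, hres, sub_eq_add_neg]
    _ = ∫ ω, (a₀ (X ω) - a (X ω)) * (g (X ω) - g₀ (X ω)) ∂μ := by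
        rw [← integral_sub hInta₀g hInta]
        simp only [sub_mul]

/-- debiased moment identity for regression functionals.  With
`g₀(x) = E[Y | X = x]` (encoded by `E[h(X)(Y - g₀(X))] = 0` for all `h`),
`m(Z; ·)` linear in `g` with `θ₀ = E[m(Z; g₀)]`, and `a₀` the Riesz representer
of the functional on the difference `g - g₀`, one has
`E[m(Z; g) + a(X)(Y - g(X))] - θ₀ = E[(a₀(X) - a(X))(g(X) - g₀(X))]`. -/
theorem stmt_15 {Ω 𝒳 : Type*} [MeasurableSpace Ω] (μ : Measure Ω) [IsProbabilityMeasure μ]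
    (X : Ω → 𝒳) (Y : Ω → ℝ) (g₀ g a a₀ : 𝒳 → ℝ)
    (Mfun : (𝒳 → ℝ) → Ω → ℝ)
    -- g₀ is the conditional mean of Y given X:
    (hg₀ : ∀ h : 𝒳 → ℝ, Integrable (fun ω => h (X ω) * (Y ω - g₀ (X ω))) μ →
        ∫ ω, h (X ω) * (Y ω - g₀ (X ω)) ∂μ = 0)
    -- linearity of m in g (in expectation):
    (hlin : ∫ ω, Mfun g ω ∂μ - ∫ ω, Mfun g₀ ω ∂μ
        = ∫ ω, Mfun (fun x => g x - g₀ x) ω ∂μ)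
    -- Riesz representation of the functional at g - g₀:
    (hriesz : ∫ ω, Mfun (fun x => g x - g₀ x) ω ∂μ
        = ∫ ω, a₀ (X ω) * (g (X ω) - g₀ (X ω)) ∂μ)
    (hIntm : Integrable (Mfun g) μ)
    (hIntm₀ : Integrable (Mfun g₀) μ)
    (hIntc : Integrable (fun ω => a (X ω) * (Y ω - g (X ω))) μ)
    (hIntc₀ : Integrable (fun ω => a (X ω) * (Y ω - g₀ (X ω))) μ)
    (hIntag : Integrable (fun ω => a (X ω) * (g (X ω) - g₀ (X ω))) μ)
    (hInta₀g : Integrable (fun ω => a₀ (X ω) * (g (X ω) - g₀ (X ω))) μ) :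
    (∫ ω, (Mfun g ω + a (X ω) * (Y ω - g (X ω))) ∂μ) - ∫ ω, Mfun g₀ ω ∂μ
      = ∫ ω, (a₀ (X ω) - a (X ω)) * (g (X ω) - g₀ (X ω)) ∂μ :=
  stmt_15_general μ X Y g₀ g a a₀ Mfun hg₀ hlin hriesz hIntm hIntc hIntc₀ hInta₀g
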